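/- arXiv:2304.04505 — 6 statements merged into one kernel-verified Lean document; each statement's English description precedes it below -/
import Mathlib

section
/- Let (Ω, F, P) be a probability space, g : Ω → ℝ a measurable function bounded above by M > 0, h ≥ 0 a real number, ε ∈ (0,1), and δ ≥ εM/(1-ε). If P{ω : g(ω) + δ ≤ h} ≥ 1 - ε, then E[g] ≤ h. -/
open MeasureTheory

theorem integral_le_mul_measureReal_add_mul_measureReal_compl {α : Type*} [MeasurableSpace α]
    {μ : Measure α} [IsFiniteMeasure μ] {f : α → ℝ} (hf : Integrable f μ) {s : Set α}
    (hs : NullMeasurableSet s μ) {a b : ℝ} (ha : ∀ x ∈ s, f x ≤ a) (hb : ∀ x ∈ sᶜ, f x ≤ b) :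
    ∫ x, f x ∂μ ≤ a * μ.real s + b * μ.real sᶜ := by
  rw [← integral_add_compl₀ hs hf]
  have hs_le : ∫ x in s, f x ∂μ ≤ ∫ _ in s, a ∂μ :=
    setIntegral_mono_on₀ hf.integrableOn (integrableOn_const (measure_ne_top μ s)) hs ha
  have hsc_le : ∫ x in sᶜ, f x ∂μ ≤ ∫ _ in sᶜ, b ∂μ :=
    setIntegral_mono_on₀ hf.integrableOn (integrableOn_const (measure_ne_top μ sᶜ)) hs.compl hb
  rw [setIntegral_const, smul_eq_mul] at hs_le hsc_le
  linarith

theorem stmt_0_general {Ω : Type*} [MeasurableSpace Ω] (P : Measure Ω) [IsProbabilityMeasure P]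
    (g : Ω → ℝ) (hg_int : Integrable g P)
    (M : ℝ) (hM : 0 < M) (hgM : ∀ ω, g ω ≤ M)
    (h : ℝ) (hh : 0 ≤ h)
    (ε : ℝ) (hε : ε ∈ Set.Ioo (0:ℝ) 1)
    (δ : ℝ) (hδ : δ ≥ ε * M / (1 - ε))
    (hP : P {ω | g ω + δ ≤ h} ≥ ENNReal.ofReal (1 - ε)) :
    ∫ ω, g ω ∂P ≤ h := by
  obtain ⟨hε0, hε1⟩ := hε
  set E := {ω | g ω + δ ≤ h}
  have hE : NullMeasurableSet E P :=
    nullMeasurableSet_le (hg_int.aemeasurable.add_const δ) aemeasurable_const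
  have hPE : 1 - ε ≤ P.real E := (ENNReal.ofReal_le_iff_le_toReal (measure_ne_top P E)).1 hP
  have hεM : ε * M ≤ δ * (1 - ε) := (div_le_iff₀ (sub_pos.2 hε1)).1 hδ
  have hδ0 : 0 ≤ δ := nonneg_of_mul_nonneg_left ((mul_pos hε0 hM).le.trans hεM) (sub_pos.2 hε1)
  have hcompl : M * (1 - P.real E) ≤ δ * P.real E := calc
    M * (1 - P.real E) ≤ M * ε := by gcongr; linarith
    _ = ε * M := mul_comm M ε
    _ ≤ δ * (1 - ε) := hεM
    _ ≤ δ * P.real E := by gcongr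
  calc ∫ ω, g ω ∂P ≤ (h - δ) * P.real E + M * P.real Eᶜ :=
        integral_le_mul_measureReal_add_mul_measureReal_compl hg_int hE
          (fun ω hω => by linarith [show g ω + δ ≤ h from hω]) (fun ω _ => hgM ω)
    _ = h * P.real E + (M * (1 - P.real E) - δ * P.real E) := by
        rw [probReal_compl_eq_one_sub₀ hE]; ring
    _ ≤ h := by
        linarith [hcompl, mul_le_of_le_one_right hh (measureReal_le_one (μ := P) (s := E))]

theorem stmt_0 {Ω : Type*} [MeasurableSpace Ω] (P : Measure Ω) [IsProbabilityMeasure P]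
    (g : Ω → ℝ) (hg_meas : Measurable g) (hg_int : Integrable g P)
    (M : ℝ) (hM : 0 < M) (hgM : ∀ ω, g ω ≤ M)
    (h : ℝ) (hh : 0 ≤ h)
    (ε : ℝ) (hε : ε ∈ Set.Ioo (0:ℝ) 1)
    (δ : ℝ) (hδ : δ ≥ ε * M / (1 - ε))
    (hP : P {ω | g ω + δ ≤ h} ≥ ENNReal.ofReal (1 - ε)) :
    ∫ ω, g ω ∂P ≤ h :=
  stmt_0_general P g hg_int M hM hgM h hh ε hε δ hδ hP
end

section
/- Let (Ω, F, P) be a probability space, X ⊆ ℝⁿ a measurable state space, Xs ⊆ X a measurable safe set with complement Xu, and X0 ⊆ Xs an initial set. Suppose g : X × Ω → ℝ is such that for each x, ω ↦ g(x,ω) is integrable and bounded above by M ≥ 1 uniformly in (x,ω). Let B : X → ℝ satisfy 0 ≤ B(x) ≤ M for all x, B(x) ≤ γ for x ∈ X0, B(x) ≥ 1 for x ∈ Xu. Fix ε ∈ (0,1), δ ≥ εM/(1-ε), and c ≥ 0. If for every x ∈ Xs, P{ω : g(x,ω) + δ ≤ B(x) + c} ≥ 1 - ε, then for every x ∈ Xs,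 E[g(x,·)] ≤ B(x) + c. -/
/-!
Let `A = {ω | g(x,ω) + δ ≤ B(x) + c}` and `p = P(A) ≥ 1 - ε`. Splitting the expectation over `A`
and its complement, where `g ≤ M`, gives `E[g(x,·)] ≤ (B(x) + c - δ) p + M (1 - p)`. The deficit
of this bound from `B(x) + c` is `(B(x) + c - M)(1 - p) + δ p ≥ δ (1 - ε) - ε M`, which the
tightening `δ ≥ εM/(1-ε)` makes nonnegative.
-/

open MeasureTheory

lemma convex_combination_le_of_tightening {a δ M ε p : ℝ} (ha : 0 ≤ a) (hM : 0 ≤ M)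
    (hε : ε < 1) (hδ : ε * M ≤ δ * (1 - ε)) (hp : 1 - ε ≤ p) (hp1 : p ≤ 1) :
    (a - δ) * p + M * (1 - p) ≤ a := by
  have hδ0 : 0 ≤ δ := by nlinarith
  nlinarith [mul_le_mul_of_nonneg_left hp hδ0, mul_le_mul_of_nonneg_left (sub_le_comm.1 hp) hM,
    mul_nonneg ha (sub_nonneg.2 hp1)]

lemma integral_le_of_le_on_of_le_on_compl {α : Type*} [MeasurableSpace α] {μ : Measure α}
    [IsFiniteMeasure μ] {f : α → ℝ} (hf : Integrable f μ) {s : Set α}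
    (hs : NullMeasurableSet s μ) {a b : ℝ} (has : ∀ x ∈ s, f x ≤ a) (hbs : ∀ x ∈ sᶜ, f x ≤ b) :
    ∫ x, f x ∂μ ≤ a * μ.real s + b * μ.real sᶜ := by
  have bound_on {t : Set α} (ht : NullMeasurableSet t μ) {c : ℝ} (hct : ∀ x ∈ t, f x ≤ c) :
      ∫ x in t, f x ∂μ ≤ c * μ.real t := by
    calc ∫ x in t, f x ∂μ ≤ ∫ _ in t, c ∂μ :=
          integral_mono_ae hf.integrableOn (integrableOn_const (measure_ne_top μ t))
            (by filter_upwards [ae_restrict_mem₀ ht] with x hx using hct x hx)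
      _ = c * μ.real t := by rw [setIntegral_const, smul_eq_mul, mul_comm]
  rw [← integral_add_compl₀ hs hf]
  exact add_le_add (bound_on hs has) (bound_on hs.compl hbs)

theorem integral_le_of_prob_add_le {Ω : Type*} [MeasurableSpace Ω] {P : Measure Ω}
    [IsProbabilityMeasure P] {f : Ω → ℝ} (hf : Integrable f P) {a δ M ε : ℝ}
    (hfM : ∀ ω, f ω ≤ M) (ha : 0 ≤ a) (hM : 0 ≤ M) (hε : ε < 1) (hδ : ε * M ≤ δ * (1 - ε))
    (hP : ENNReal.ofReal (1 - ε) ≤ P {ω | f ω + δ ≤ a}) :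
    ∫ ω, f ω ∂P ≤ a := by
  set A := {ω | f ω + δ ≤ a}
  have hA : NullMeasurableSet A P :=
    nullMeasurableSet_le (hf.aemeasurable.add_const δ) aemeasurable_const
  have hpA : 1 - ε ≤ P.real A := (ENNReal.ofReal_le_iff_le_toReal (measure_ne_top P A)).1 hP
  have hAc : P.real Aᶜ = 1 - P.real A := by rw [measureReal_compl₀ hA, probReal_univ]
  calc ∫ ω, f ω ∂P ≤ (a - δ) * P.real A + M * P.real Aᶜ :=
        integral_le_of_le_on_of_le_on_compl hf hA (fun ω hω ↦ le_sub_iff_add_le.2 hω)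
          (fun ω _ ↦ hfM ω)
    _ ≤ a := by
        rw [hAc]
        exact convex_combination_le_of_tightening ha hM hε hδ hpA measureReal_le_one

theorem stmt_1_general {Ω : Type*} [MeasurableSpace Ω] (P : Measure Ω) [IsProbabilityMeasure P]
    {n : ℕ} (X Xs : Set (Fin n → ℝ))
    (hXsX : Xs ⊆ X)
    (g : (Fin n → ℝ) → Ω → ℝ)
    (hg_int : ∀ x ∈ X, Integrable (g x) P)
    (M : ℝ) (hM : 1 ≤ M) (hgM : ∀ x ∈ X, ∀ ω, g x ω ≤ M)
    (B : (Fin n → ℝ) → ℝ)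
    (hB_bnd : ∀ x ∈ X, B x ∈ Set.Icc (0:ℝ) M)
    (ε : ℝ) (hε : ε ∈ Set.Ioo (0:ℝ) 1)
    (δ : ℝ) (hδ : δ ≥ ε * M / (1 - ε))
    (c : ℝ) (hc : 0 ≤ c)
    (hP : ∀ x ∈ Xs, P {ω | g x ω + δ ≤ B x + c} ≥ ENNReal.ofReal (1 - ε)) :
    ∀ x ∈ Xs, ∫ ω, g x ω ∂P ≤ B x + c := by
  intro x hx
  have hxX : x ∈ X := hXsX hx
  have hδM : ε * M ≤ δ * (1 - ε) := (div_le_iff₀ (sub_pos.2 hε.2)).1 hδ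
  exact integral_le_of_prob_add_le (hg_int x hxX) (hgM x hxX)
    (add_nonneg (hB_bnd x hxX).1 hc) (zero_le_one.trans hM) hε.2 hδM (hP x hx)

theorem stmt_1 {Ω : Type*} [MeasurableSpace Ω] (P : Measure Ω) [IsProbabilityMeasure P]
    {n : ℕ} (X Xs X0 : Set (Fin n → ℝ))
    (hX : MeasurableSet X) (hXs : MeasurableSet Xs) (hXsX : Xs ⊆ X) (hX0 : X0 ⊆ Xs)
    (Xu : Set (Fin n → ℝ)) (hXu : Xu = X \ Xs)
    (g : (Fin n → ℝ) → Ω → ℝ)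
    (hg_int : ∀ x ∈ X, Integrable (g x) P)
    (M : ℝ) (hM : 1 ≤ M) (hgM : ∀ x ∈ X, ∀ ω, g x ω ≤ M)
    (B : (Fin n → ℝ) → ℝ)
    (hB_bnd : ∀ x ∈ X, B x ∈ Set.Icc (0:ℝ) M)
    (γ : ℝ) (hB_init : ∀ x ∈ X0, B x ≤ γ)
    (hB_unsafe : ∀ x ∈ Xu, 1 ≤ B x)
    (ε : ℝ) (hε : ε ∈ Set.Ioo (0:ℝ) 1)
    (δ : ℝ) (hδ : δ ≥ ε * M / (1 - ε))
    (c : ℝ) (hc : 0 ≤ c)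
    (hP : ∀ x ∈ Xs, P {ω | g x ω + δ ≤ B x + c} ≥ ENNReal.ofReal (1 - ε)) :
    ∀ x ∈ Xs, ∫ ω, g x ω ∂P ≤ B x + c :=
  stmt_1_general P X Xs hXsX g hg_int M hM hgM B hB_bnd ε hε δ hδ c hc hP
end

section
/- Let (xₖ)ₖ∈ℕ be a discrete-time stochastic process adapted to a filtration (Fₖ) on a probability space (Ω, F, P), taking values in a measurable space X. Let Xs ⊆ X be measurable, B : X → ℝ a nonnegative measurable function with B(x) ≥ 1 for all x ∉ Xs, and suppose there are constants γ, c ≥ 0 such that B(x₀) ≤ γ almost surely and E[B(x_{k+1}) | Fₖ] ≤ B(xₖ) + c almost surely on the event {xⱼ ∈ Xs for all j ≤ k}. Then for any T ∈ ℕ, P{xₖ ∈ Xs for all k ∈ {0,…,T}} ≥ 1 - (γ + c·T). -/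
/-!
Let `A k` be the event that the process stays in `Xs` up to time `k`, and
`V k = ∫_{A k} B (x k) dP + P (A k)ᶜ`, the mean of `B` along the process stopped on leaving `Xs`
with the post-exit values replaced by `1`. Since `B ≥ 1` outside `Xs`, leaving at step `k + 1`
costs at most `B (x (k + 1))`, so the conditional-expectation bound gives `V (k + 1) ≤ V k + c`;
moreover `V 0 ≤ E[B (x 0)] ≤ γ`, and `P (A T)ᶜ ≤ V T` because `B ≥ 0`.
-/

open MeasureTheory

section SetIntegral

variable {Ω : Type*} {m0 : MeasurableSpace Ω} {μ : Measure Ω} {s t : Set Ω} {f : Ω → ℝ}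

theorem setIntegral_inter_add_measureReal_sdiff_le [IsFiniteMeasure μ] (hs : MeasurableSet s)
    (ht : MeasurableSet t) (hf : IntegrableOn f s μ) (h_one : ∀ ω ∈ s \ t, 1 ≤ f ω) :
    ∫ ω in s ∩ t, f ω ∂μ + μ.real (s \ t) ≤ ∫ ω in s, f ω ∂μ := by
  have h_diff : μ.real (s \ t) ≤ ∫ ω in s \ t, f ω ∂μ := by
    simpa using setIntegral_mono_on (integrable_const 1).integrableOn
      (hf.mono_set Set.sdiff_subset) (hs.diff ht) h_one
  linarith [integral_inter_add_sdiff ht hf]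

theorem setIntegral_le_of_condExp_le {m : MeasurableSpace Ω} (hm : m ≤ m0)
    [SigmaFinite (μ.trim hm)] {g : Ω → ℝ} (hf : Integrable f μ) (hg : IntegrableOn g s μ)
    (hs : MeasurableSet[m] s) (hle : ∀ᵐ ω ∂μ, ω ∈ s → μ[f|m] ω ≤ g ω) :
    ∫ ω in s, f ω ∂μ ≤ ∫ ω in s, g ω ∂μ := by
  rw [← setIntegral_condExp hm hf hs]
  exact setIntegral_mono_ae_restrict integrable_condExp.integrableOn hg
    ((ae_restrict_iff' (hm s hs)).2 hle)

end SetIntegral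

section Barrier

variable {Ω X : Type*} {m0 : MeasurableSpace Ω} (x : ℕ → Ω → X) (Xs : Set X)

def stayedIn (k : ℕ) : Set Ω := {ω | ∀ j ≤ k, x j ω ∈ Xs}

lemma stayedIn_zero : stayedIn x Xs 0 = x 0 ⁻¹' Xs := by
  ext ω
  simp [stayedIn]

lemma stayedIn_succ (k : ℕ) :
    stayedIn x Xs (k + 1) = stayedIn x Xs k ∩ x (k + 1) ⁻¹' Xs := by
  ext ω
  simp [stayedIn, Nat.le_succ_iff, or_imp, forall_and]

variable {x Xs}

lemma measurableSet_stayedIn [MeasurableSpace X] {ℱ : Filtration ℕ m0} (hx : ∀ k, Measurable[ℱ k] (x k))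
    (hXs : MeasurableSet Xs) (k : ℕ) : MeasurableSet[ℱ k] (stayedIn x Xs k) := by
  induction k with
  | zero => rw [stayedIn_zero]; exact hx 0 hXs
  | succ k ih => rw [stayedIn_succ]; exact (ℱ.mono k.le_succ _ ih).inter (hx (k + 1) hXs)

variable (x Xs)

noncomputable def cappedBarrierMean (P : Measure Ω) (B : X → ℝ) (k : ℕ) : ℝ :=
  ∫ ω in stayedIn x Xs k, B (x k ω) ∂P + P.real (stayedIn x Xs k)ᶜ

variable {x Xs} {P : Measure Ω} {B : X → ℝ}

lemma measureReal_compl_stayedIn_le (hB_nonneg : ∀ y, 0 ≤ B y) (k : ℕ) :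
    P.real (stayedIn x Xs k)ᶜ ≤ cappedBarrierMean x Xs P B k := by
  have : 0 ≤ ∫ ω in stayedIn x Xs k, B (x k ω) ∂P := integral_nonneg fun ω ↦ hB_nonneg _
  unfold cappedBarrierMean
  linarith

variable [MeasurableSpace X] [IsProbabilityMeasure P]

lemma cappedBarrierMean_zero_le (hx0 : Measurable (x 0)) (hXs : MeasurableSet Xs)
    (hB_unsafe : ∀ y ∉ Xs, 1 ≤ B y) (hB_int : Integrable (fun ω ↦ B (x 0 ω)) P) :
    cappedBarrierMean x Xs P B 0 ≤ ∫ ω, B (x 0 ω) ∂P := by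
  simpa [cappedBarrierMean, stayedIn_zero, Set.compl_eq_univ_sdiff] using
    setIntegral_inter_add_measureReal_sdiff_le (μ := P) MeasurableSet.univ (hx0 hXs)
      hB_int.integrableOn fun ω hω ↦ hB_unsafe _ hω.2

lemma cappedBarrierMean_succ_le {ℱ : Filtration ℕ m0} (hx : ∀ k, Measurable[ℱ k] (x k))
    (hXs : MeasurableSet Xs) (hB_unsafe : ∀ y ∉ Xs, 1 ≤ B y)
    {c : ℝ} (hc : 0 ≤ c) {k : ℕ}
    (hB_int : ∀ k, Integrable (fun ω ↦ B (x k ω)) P)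
    (hmart : ∀ᵐ ω ∂P, ω ∈ stayedIn x Xs k →
      (P[fun ω' ↦ B (x (k + 1) ω') | ℱ k]) ω ≤ B (x k ω) + c) :
    cappedBarrierMean x Xs P B (k + 1) ≤ cappedBarrierMean x Xs P B k + c := by
  unfold cappedBarrierMean
  rw [stayedIn_succ]
  set A := stayedIn x Xs k
  have hA : MeasurableSet A := ℱ.le k _ (measurableSet_stayedIn hx hXs k)
  have hsafe : MeasurableSet (x (k + 1) ⁻¹' Xs) := ℱ.le (k + 1) _ (hx (k + 1) hXs)
  have h_exit := setIntegral_inter_add_measureReal_sdiff_le hA hsafe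
    (hB_int (k + 1)).integrableOn fun ω hω ↦ hB_unsafe _ hω.2
  have h_cond : ∫ ω in A, B (x (k + 1) ω) ∂P ≤ ∫ ω in A, (B (x k ω) + c) ∂P :=
    setIntegral_le_of_condExp_le (ℱ.le k) (hB_int (k + 1))
      ((hB_int k).add (integrable_const c)).integrableOn (measurableSet_stayedIn hx hXs k) hmart
  have h_split : P.real (A ∩ x (k + 1) ⁻¹' Xs)ᶜ = P.real Aᶜ + P.real (A \ x (k + 1) ⁻¹' Xs) := by
    rw [probReal_compl_eq_one_sub (hA.inter hsafe), probReal_compl_eq_one_sub hA,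
      ← measureReal_inter_add_sdiff (s := A) hsafe]
    ring
  have h_mean : ∫ ω in A, (B (x k ω) + c) ∂P = ∫ ω in A, B (x k ω) ∂P + P.real A * c := by
    rw [integral_add (hB_int k).integrableOn (integrable_const c).integrableOn, setIntegral_const,
      smul_eq_mul]
  have hPA : P.real A * c ≤ c := mul_le_of_le_one_left hc measureReal_le_one
  rw [h_split]
  linarith

theorem cappedBarrierMean_le {ℱ : Filtration ℕ m0} (hx : ∀ k, Measurable[ℱ k] (x k))
    (hXs : MeasurableSet Xs) (hB_unsafe : ∀ y ∉ Xs, 1 ≤ B y) {γ c : ℝ} (hc : 0 ≤ c)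
    (hB_init : ∀ᵐ ω ∂P, B (x 0 ω) ≤ γ) (hB_int : ∀ k, Integrable (fun ω ↦ B (x k ω)) P)
    (hmart : ∀ k, ∀ᵐ ω ∂P, ω ∈ stayedIn x Xs k →
      (P[fun ω' ↦ B (x (k + 1) ω') | ℱ k]) ω ≤ B (x k ω) + c) (k : ℕ) :
    cappedBarrierMean x Xs P B k ≤ γ + c * k := by
  induction k with
  | zero =>
    have h_init : ∫ ω, B (x 0 ω) ∂P ≤ γ := by
      simpa using integral_mono_ae (hB_int 0) (integrable_const γ) hB_init
    simpa using (cappedBarrierMean_zero_le ((hx 0).mono (ℱ.le 0) le_rfl) hXs hB_unsafe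
      (hB_int 0)).trans h_init
  | succ k ih =>
    have := cappedBarrierMean_succ_le hx hXs hB_unsafe hc hB_int (hmart k)
    push_cast
    linarith

end Barrier

lemma ofReal_one_sub_le_of_measureReal_compl_le {Ω : Type*} {m0 : MeasurableSpace Ω}
    {P : Measure Ω} [IsProbabilityMeasure P] {s : Set Ω} (hs : MeasurableSet s) {r : ℝ}
    (h : P.real sᶜ ≤ r) : ENNReal.ofReal (1 - r) ≤ P s := by
  rw [← ofReal_measureReal]
  exact ENNReal.ofReal_le_ofReal (by linarith [probReal_compl_eq_one_sub (μ := P) hs])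

theorem stmt_4_general {Ω : Type*} {m0 : MeasurableSpace Ω} (P : Measure Ω) [IsProbabilityMeasure P]
    {X : Type*} [MeasurableSpace X]
    (ℱ : Filtration ℕ m0)
    (x : ℕ → Ω → X) (hx_adapted : ∀ k, Measurable[ℱ k] (x k))
    (Xs : Set X) (hXs : MeasurableSet Xs)
    (B : X → ℝ) (hB_nonneg : ∀ y, 0 ≤ B y)
    (hB_unsafe : ∀ y ∉ Xs, 1 ≤ B y)
    (γ c : ℝ) (hc : 0 ≤ c)
    (hB_init : ∀ᵐ ω ∂P, B (x 0 ω) ≤ γ)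
    (hB_int : ∀ k, Integrable (fun ω => B (x k ω)) P)
    (hmart : ∀ k, ∀ᵐ ω ∂P,
      (∀ j ≤ k, x j ω ∈ Xs) →
        (P[fun ω' => B (x (k + 1) ω') | ℱ k]) ω ≤ B (x k ω) + c)
    (T : ℕ) :
    P {ω | ∀ k ≤ T, x k ω ∈ Xs} ≥ ENNReal.ofReal (1 - (γ + c * T)) :=
  ofReal_one_sub_le_of_measureReal_compl_le
    (ℱ.le T _ (measurableSet_stayedIn hx_adapted hXs T))
    ((measureReal_compl_stayedIn_le hB_nonneg T).trans
      (cappedBarrierMean_le hx_adapted hXs hB_unsafe hc hB_init hB_int hmart T))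

theorem stmt_4 {Ω : Type*} {m0 : MeasurableSpace Ω} (P : Measure Ω) [IsProbabilityMeasure P]
    {X : Type*} [MeasurableSpace X]
    (ℱ : Filtration ℕ m0)
    (x : ℕ → Ω → X) (hx_adapted : ∀ k, Measurable[ℱ k] (x k))
    (Xs : Set X) (hXs : MeasurableSet Xs)
    (B : X → ℝ) (hB_meas : Measurable B) (hB_nonneg : ∀ y, 0 ≤ B y)
    (hB_unsafe : ∀ y ∉ Xs, 1 ≤ B y)
    (γ c : ℝ) (hγ : 0 ≤ γ) (hc : 0 ≤ c)
    (hB_init : ∀ᵐ ω ∂P, B (x 0 ω) ≤ γ)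
    (hB_int : ∀ k, Integrable (fun ω => B (x k ω)) P)
    (hmart : ∀ k, ∀ᵐ ω ∂P,
      (∀ j ≤ k, x j ω ∈ Xs) →
        (P[fun ω' => B (x (k + 1) ω') | ℱ k]) ω ≤ B (x k ω) + c)
    (T : ℕ) :
    P {ω | ∀ k ≤ T, x k ω ∈ Xs} ≥ ENNReal.ofReal (1 - (γ + c * T)) :=
  stmt_4_general P ℱ x hx_adapted Xs hXs B hB_nonneg hB_unsafe γ c hc hB_init hB_int hmart T
end

section
/- Let (Mₖ)_{k=0,…,T} be a nonnegative process adapted to a filtration (Fₖ) with E[M_{k+1} | Fₖ] ≤ Mₖ + c almost surely for a constant c ≥ 0, and M₀ ≤ γ almost surely. Then P{max_{0 ≤ k ≤ T} Mₖ ≥ 1} ≤ γ + c·T. -/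
/-!
`Mₖ - c k` is a supermartingale, hence so is `gₖ = Mₖ + c (T - k)`, which is nonnegative up to
time `T` and dominates `M`. Stop `g` when it first reaches `1` (or at `T`): optional stopping
gives `E[g_τ] ≤ E[g₀] ≤ γ + cT`, and Markov's inequality for `g_τ ≥ 0` bounds the probability
that `g`, let alone `M`, reaches `1` before `T`.
-/

open MeasureTheory ProbabilityTheory

namespace MeasureTheory

variable {Ω : Type*} {m0 : MeasurableSpace Ω} {μ : Measure Ω} {ℱ : Filtration ℕ m0}

theorem supermartingale_sub_mul_of_condExp_le_add [IsFiniteMeasure μ] {M : ℕ → Ω → ℝ} {c : ℝ}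
    (hM_adapted : Adapted ℱ M) (hM_int : ∀ k, Integrable (M k) μ)
    (hM_drift : ∀ k, ∀ᵐ ω ∂μ, μ[M (k + 1) | ℱ k] ω ≤ M k ω + c) :
    Supermartingale (fun k ω => M k ω - c * k) ℱ μ := by
  refine supermartingale_nat (fun k => ((hM_adapted k).sub measurable_const).stronglyMeasurable)
    (fun k => (hM_int k).sub (integrable_const _)) fun k => ?_
  have hcondExp : μ[fun ω => M (k + 1) ω - c * ((k + 1 : ℕ) : ℝ) | ℱ k]
      =ᵐ[μ] μ[M (k + 1) | ℱ k] - fun _ => c * ((k + 1 : ℕ) : ℝ) := by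
    rw [← condExp_const (μ := μ) (ℱ.le k) (c * ((k + 1 : ℕ) : ℝ))]
    exact condExp_sub (hM_int _) (integrable_const _) _
  filter_upwards [hcondExp, hM_drift k] with ω hω hdrift
  rw [hω, Pi.sub_apply]
  push_cast
  linarith

theorem Supermartingale.expected_stoppedValue_anti [SigmaFiniteFiltration μ ℱ] {f : ℕ → Ω → ℝ}
    (hf : Supermartingale f ℱ μ) {τ π : Ω → ℕ∞} (hτ : IsStoppingTime ℱ τ)
    (hπ : IsStoppingTime ℱ π) (hle : τ ≤ π) {N : ℕ} (hbdd : ∀ ω, π ω ≤ N) :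
    μ[stoppedValue f π] ≤ μ[stoppedValue f τ] := by
  have := hf.neg.expected_stoppedValue_mono hτ hπ hle hbdd
  change ∫ ω, -stoppedValue f τ ω ∂μ ≤ ∫ ω, -stoppedValue f π ω ∂μ at this
  rwa [integral_neg, integral_neg, neg_le_neg_iff] at this

/-- Ville's maximal inequality on a finite horizon. -/
theorem Supermartingale.mul_measureReal_exists_ge_le_integral [IsFiniteMeasure μ]
    {g : ℕ → Ω → ℝ} (hg : Supermartingale g ℱ μ) {T : ℕ} (hg_nonneg : ∀ k ≤ T, ∀ ω, 0 ≤ g k ω)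
    (ε : ℝ) : ε * μ.real {ω | ∃ k ≤ T, ε ≤ g k ω} ≤ μ[g 0] := by
  set τ : Ω → ℕ := hittingBtwn g (Set.Ici ε) 0 T
  have hτ : IsStoppingTime ℱ (fun ω => (τ ω : ℕ∞)) :=
    hg.stronglyAdapted.adapted.isStoppingTime_hittingBtwn measurableSet_Ici
  have hτ_le (ω : Ω) : τ ω ≤ T := hittingBtwn_le ω
  have hevent :
      {ω | ∃ k ≤ T, ε ≤ g k ω} = {ω | ε ≤ stoppedValue g (fun ω => (τ ω : ℕ∞)) ω} := by
    ext ω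
    refine ⟨fun ⟨k, hk, hεk⟩ => stoppedValue_hittingBtwn_mem ⟨k, ⟨k.zero_le, hk⟩, hεk⟩,
      fun hε => ⟨τ ω, hτ_le ω, hε⟩⟩
  rw [hevent]
  calc ε * μ.real {ω | ε ≤ stoppedValue g (fun ω => (τ ω : ℕ∞)) ω}
      ≤ μ[stoppedValue g fun ω => (τ ω : ℕ∞)] :=
        mul_meas_ge_le_integral_of_nonneg
          (Filter.Eventually.of_forall fun ω => hg_nonneg _ (hτ_le ω) ω)
          (integrable_stoppedValue ℕ hτ hg.integrable fun ω => WithTop.coe_le_coe.mpr (hτ_le ω)) ε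
    _ ≤ μ[stoppedValue g fun _ => ((0 : ℕ) : ℕ∞)] :=
        hg.expected_stoppedValue_anti (isStoppingTime_const ℱ 0) hτ
          (fun ω => WithTop.coe_le_coe.mpr (τ ω).zero_le)
          (fun ω => WithTop.coe_le_coe.mpr (hτ_le ω))
    _ = μ[g 0] := rfl

end MeasureTheory

theorem stmt_5 {Ω : Type*} {m0 : MeasurableSpace Ω} (P : Measure Ω) [IsProbabilityMeasure P]
    (ℱ : Filtration ℕ m0) (T : ℕ)
    (M : ℕ → Ω → ℝ) (hM_adapted : Adapted ℱ M)
    (hM_int : ∀ k, Integrable (M k) P)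
    (hM_nonneg : ∀ k ω, 0 ≤ M k ω)
    (c γ : ℝ) (hc : 0 ≤ c)
    (hmart : ∀ k, ∀ᵐ ω ∂P, (P[M (k + 1) | ℱ k]) ω ≤ M k ω + c)
    (h0 : ∀ᵐ ω ∂P, M 0 ω ≤ γ) :
    P {ω | ∃ k ≤ T, 1 ≤ M k ω} ≤ ENNReal.ofReal (γ + c * T) := by
  set g : ℕ → Ω → ℝ := (fun k ω => M k ω - c * k) + fun _ _ => c * T
  have hg : Supermartingale g ℱ P :=
    (supermartingale_sub_mul_of_condExp_le_add hM_adapted hM_int hmart).add_martingale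
      (martingale_const ℱ P _)
  have hM_le_g (k : ℕ) (hk : k ≤ T) (ω : Ω) : M k ω ≤ g k ω := by
    have : (k : ℝ) ≤ T := by exact_mod_cast hk
    simp only [g, Pi.add_apply]
    nlinarith
  have hg_nonneg (k : ℕ) (hk : k ≤ T) (ω : Ω) : 0 ≤ g k ω :=
    (hM_nonneg k ω).trans (hM_le_g k hk ω)
  have hg0 : P[g 0] ≤ γ + c * T := calc
    P[g 0] = P[M 0] + c * T := by
      simp only [g, Pi.add_def, CharP.cast_eq_zero, mul_zero, sub_zero]
      rw [integral_add (hM_int 0) (integrable_const _)]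
      simp
    _ ≤ γ + c * T := by
      gcongr
      simpa using integral_mono_ae (hM_int 0) (integrable_const γ) h0
  calc P {ω | ∃ k ≤ T, 1 ≤ M k ω}
      ≤ P {ω | ∃ k ≤ T, 1 ≤ g k ω} := measure_mono fun ω ⟨k, hk, h1⟩ =>
        ⟨k, hk, h1.trans (hM_le_g k hk ω)⟩
    _ = ENNReal.ofReal (P.real {ω | ∃ k ≤ T, 1 ≤ g k ω}) := (ofReal_measureReal).symm
    _ ≤ ENNReal.ofReal (γ + c * T) := by
      gcongr
      simpa using (hg.mul_measureReal_exists_ge_le_integral hg_nonneg 1).trans hg0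
end

section
/- For ε ∈ (0,1), d ∈ ℕ, and β ∈ (0,1), if N ≥ (2/ε)·(ln(1/β) + d), then Σ_{i=0}^{d-1} C(N,i) εⁱ (1-ε)^{N-i} ≤ β. -/
theorem stmt_14 (ε β : ℝ) (hε : ε ∈ Set.Ioo (0:ℝ) 1) (hβ : β ∈ Set.Ioo (0:ℝ) 1)
    (d N : ℕ) (hN : (N : ℝ) ≥ (2 / ε) * (Real.log (1 / β) + d)) :
    ∑ i ∈ Finset.range d, (N.choose i : ℝ) * ε ^ i * (1 - ε) ^ (N - i) ≤ β := by
  obtain ⟨hε0, hε1⟩ := hε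
  obtain ⟨hβ0, hβ1⟩ := hβ
  rcases Nat.eq_zero_or_pos d with rfl | hd
  · simpa using hβ0.le
  have hlogβ : 0 < Real.log (1/β) := Real.log_pos (by
    rw [lt_div_iff₀ hβ0]; linarith)
  have hNε : (N:ℝ) * ε ≥ 2 * (Real.log (1/β) + d) := by
    rw [ge_iff_le, div_mul_eq_mul_div, div_le_iff₀ hε0] at hN
    linarith
  have hd0 : (0:ℝ) ≤ d := Nat.cast_nonneg d
  have hdN : d ≤ N := by
    have hNεN : (N:ℝ) * ε ≤ N := by nlinarith [(Nat.cast_nonneg N : (0:ℝ) ≤ N)]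
    have : (d:ℝ) < N := by nlinarith
    exact_mod_cast this.le
  have h1ε : (0:ℝ) ≤ 1 - ε := by linarith
  -- step 1: bound each term
  have hterm : ∀ i ∈ Finset.range d,
      (N.choose i : ℝ) * ε ^ i * (1 - ε) ^ (N - i)
        ≤ 2 ^ (d-1) * ((N.choose i : ℝ) * (ε/2) ^ i * (1 - ε) ^ (N - i)) := by
    intro i hi
    have hi' : i ≤ d - 1 := Nat.le_sub_one_of_lt (Finset.mem_range.mp hi)
    have h2 : (2:ℝ)^i ≤ 2^(d-1) := pow_le_pow_right₀ one_le_two hi'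
    have hnn : (0:ℝ) ≤ (N.choose i : ℝ) * (ε/2)^i * (1-ε)^(N-i) := by positivity
    have hεpow : ε ^ i = (ε/2)^i * 2^i := by
      rw [div_pow, div_mul_cancel₀]
      positivity
    calc (N.choose i : ℝ) * ε ^ i * (1 - ε) ^ (N - i)
        = 2^i * ((N.choose i : ℝ) * (ε/2)^i * (1-ε)^(N-i)) := by rw [hεpow]; ring
      _ ≤ 2^(d-1) * ((N.choose i : ℝ) * (ε/2)^i * (1-ε)^(N-i)) :=
          mul_le_mul_of_nonneg_right h2 hnn
  have step1 : (∑ i ∈ Finset.range d, (N.choose i : ℝ) * ε ^ i * (1 - ε) ^ (N - i))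
      ≤ 2^(d-1) * ∑ i ∈ Finset.range d, (N.choose i : ℝ) * (ε/2) ^ i * (1 - ε) ^ (N - i) := by
    rw [Finset.mul_sum]
    exact Finset.sum_le_sum hterm
  -- step 2: binomial theorem
  have step2 : ∑ i ∈ Finset.range d, (N.choose i : ℝ) * (ε/2) ^ i * (1 - ε) ^ (N - i)
      ≤ (1 - ε/2)^N := by
    have hext : ∑ i ∈ Finset.range d, (N.choose i : ℝ) * (ε/2) ^ i * (1 - ε) ^ (N - i)
        ≤ ∑ i ∈ Finset.range (N+1), (N.choose i : ℝ) * (ε/2) ^ i * (1 - ε) ^ (N - i) :=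
      Finset.sum_le_sum_of_subset_of_nonneg (Finset.range_subset_range.mpr (by omega))
        (fun i _ _ => by positivity)
    have hbin : (ε/2 + (1-ε))^N
        = ∑ i ∈ Finset.range (N+1), (N.choose i : ℝ) * (ε/2) ^ i * (1 - ε) ^ (N - i) := by
      rw [add_pow]
      exact Finset.sum_congr rfl fun i _ => by ring
    have : (ε/2 + (1-ε)) = 1 - ε/2 := by ring
    rw [this] at hbin
    rw [← hbin] at hext
    exact hext
  -- step 3: 1 - x ≤ exp(-x)
  have step3 : (1 - ε/2)^N ≤ Real.exp (-((ε/2) * N)) := by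
    have h1 : 1 - ε/2 ≤ Real.exp (-(ε/2)) := by
      have := Real.add_one_le_exp (-(ε/2))
      linarith
    have h0 : (0:ℝ) ≤ 1 - ε/2 := by linarith
    calc (1 - ε/2)^N ≤ (Real.exp (-(ε/2)))^N := pow_le_pow_left₀ h0 h1 N
      _ = Real.exp (-((ε/2) * N)) := by
          rw [← Real.exp_nat_mul]; ring_nf
  -- step 4: combine
  have hL : Real.exp (-((ε/2)*N)) ≤ Real.exp (-(Real.log (1/β) + d)) := by
    apply Real.exp_le_exp.mpr
    nlinarith
  have hexpβ : Real.exp (-(Real.log (1/β) + d)) = β * Real.exp (-(d:ℝ)) := by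
    rw [neg_add, Real.exp_add, Real.exp_neg, Real.exp_log (by positivity : (0:ℝ) < 1/β),
      one_div, inv_inv]
  have h2d : (2:ℝ)^(d-1) ≤ Real.exp (d:ℝ) := by
    calc (2:ℝ)^(d-1) ≤ 2^d := pow_le_pow_right₀ one_le_two (Nat.sub_le d 1)
      _ ≤ (Real.exp 1)^d := by
          apply pow_le_pow_left₀ (by norm_num)
          have := Real.exp_one_gt_d9; linarith
      _ = Real.exp (d:ℝ) := by rw [← Real.exp_nat_mul, mul_one]
  have hfinal : (2:ℝ)^(d-1) * Real.exp (-((ε/2)*N)) ≤ β := by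
    have hchain : Real.exp (-((ε/2)*N)) ≤ β * Real.exp (-(d:ℝ)) := by
      rw [← hexpβ]; exact hL
    calc (2:ℝ)^(d-1) * Real.exp (-((ε/2)*N))
        ≤ Real.exp (d:ℝ) * (β * Real.exp (-(d:ℝ))) :=
          mul_le_mul h2d hchain (Real.exp_nonneg _) (Real.exp_nonneg _)
      _ = β * (Real.exp (d:ℝ) * Real.exp (-(d:ℝ))) := by ring
      _ = β := by rw [← Real.exp_add, add_neg_cancel, Real.exp_zero, mul_one]
  calc ∑ i ∈ Finset.range d, (N.choose i : ℝ) * ε ^ i * (1 - ε) ^ (N - i)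
      ≤ 2^(d-1) * ∑ i ∈ Finset.range d, (N.choose i : ℝ) * (ε/2) ^ i * (1 - ε) ^ (N - i) := step1
    _ ≤ 2^(d-1) * (1 - ε/2)^N := by
        apply mul_le_mul_of_nonneg_left step2 (by positivity)
    _ ≤ 2^(d-1) * Real.exp (-((ε/2)*N)) := by
        apply mul_le_mul_of_nonneg_left step3 (by positivity)
    _ ≤ β := hfinal
end

section
/- Let (Ω, F, P) be a probability space and Xs a measurable set in a measurable space X. Suppose B : X → ℝ is measurable with 0 ≤ B ≤ M, B ≥ 1 on the complement of Xs, and suppose f : X → X and η : Ω → X are such that for every x ∈ Xs, E[B(f(x) + η(ω))] ≤ B(x) + c, where addition is in ℝⁿ ⊇ X, and B(x) ≤ γ for x in an initial set X0 ⊆ Xs. Then for the Markov chain x_{k+1} = f(x_k) + η_k with (η_k) i.i.d. with law that of η and x₀ ∈ X0 deterministic, P{x_k ∈ Xs for all k = 0,…,T} ≥ 1 - (γ + c·T). -/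
/-!
Let `S k` be the event that the chain stays in `Xs` up to time `k`, and let `V k` equal
`B (x k)` on `S k` and `1` off it. Since `B ≥ 1` outside `Xs`, leaving `Xs` at time `k + 1`
does not increase `V`, and on `S k` the past is independent of the fresh noise `η k`, so the
one-step hypothesis gives `E[V (k + 1)] ≤ E[V k] + c`. Hence
`P (S Tᶜ) ≤ E[V T] ≤ B x₀ + c T ≤ γ + c T`.
-/

open MeasureTheory ProbabilityTheory

namespace ProbabilityTheory

variable {Ω α β : Type*}

theorem integral_piecewise_one [MeasurableSpace Ω] {P : Measure Ω} [IsFiniteMeasure P]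
    {s : Set Ω} [DecidablePred (· ∈ s)] (hs : MeasurableSet s) {f : Ω → ℝ}
    (hf : IntegrableOn f s P) :
    ∫ ω, s.piecewise f (fun _ => 1) ω ∂P = ∫ ω in s, f ω ∂P + P.real sᶜ := by
  rw [integral_piecewise hs hf (integrable_const 1).integrableOn]
  simp

structure IsNoiseDrivenChain (x : ℕ → Ω → α) (x₀ : α) (F : α → β → α) (η : ℕ → Ω → β) :
    Prop where
  init : ∀ ω, x 0 ω = x₀
  step : ∀ k ω, x (k + 1) ω = F (x k ω) (η k ω)

def safeUpTo (x : ℕ → Ω → α) (Xs : Set α) (k : ℕ) : Set Ω := {ω | ∀ j ≤ k, x j ω ∈ Xs}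

theorem mem_safeUpTo_succ {x : ℕ → Ω → α} {Xs : Set α} {k : ℕ} {ω : Ω} :
    ω ∈ safeUpTo x Xs (k + 1) ↔ ω ∈ safeUpTo x Xs k ∧ x (k + 1) ω ∈ Xs := by
  simp only [safeUpTo, Set.mem_ofPred_eq, Nat.le_succ_iff, or_imp, forall_and, forall_eq]

/-- A lower bound for the barrier along the chain stopped on leaving `Xs`. -/
noncomputable def stoppedBarrier (B : α → ℝ) (x : ℕ → Ω → α) (Xs : Set α) (k : ℕ) : Ω → ℝ :=
  open Classical in (safeUpTo x Xs k).piecewise (fun ω => B (x k ω)) fun _ => 1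

theorem integral_stoppedBarrier [MeasurableSpace Ω] {P : Measure Ω} [IsFiniteMeasure P]
    {x : ℕ → Ω → α} {Xs : Set α} {B : α → ℝ} {k : ℕ} (hS : MeasurableSet (safeUpTo x Xs k))
    (hBx : Integrable (fun ω => B (x k ω)) P) :
    ∫ ω, stoppedBarrier B x Xs k ω ∂P =
      ∫ ω in safeUpTo x Xs k, B (x k ω) ∂P + P.real (safeUpTo x Xs k)ᶜ := by
  classical
  exact integral_piecewise_one hS hBx.integrableOn

variable [MeasurableSpace α] [mβ : MeasurableSpace β]

section Freezing

variable [mΩ : MeasurableSpace Ω] {P : Measure Ω} [IsProbabilityMeasure P]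

theorem IndepFun.integral_comp_eq_integral_integral {W : Ω → α} {ξ : Ω → β}
    (hW : Measurable W) (hξ : Measurable ξ) (hind : IndepFun W ξ P) {g : α → β → ℝ}
    (hg : Measurable (Function.uncurry g)) {C : ℝ} (hgC : ∀ a b, |g a b| ≤ C) :
    ∫ ω, g (W ω) (ξ ω) ∂P = ∫ ω, ∫ ω', g (W ω) (ξ ω') ∂P ∂P := by
  have hmap := (indepFun_iff_map_prod_eq_prod_map_map hW.aemeasurable hξ.aemeasurable).mp hind
  have hgi : Integrable (Function.uncurry g) ((P.map W).prod (P.map ξ)) :=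
    .of_bound hg.aestronglyMeasurable C (ae_of_all _ fun p => hgC p.1 p.2)
  calc ∫ ω, g (W ω) (ξ ω) ∂P = ∫ p, Function.uncurry g p ∂((P.map W).prod (P.map ξ)) := by
        rw [← hmap, integral_map (hW.prodMk hξ).aemeasurable hg.aestronglyMeasurable]; rfl
    _ = ∫ a, ∫ b, g a b ∂(P.map ξ) ∂(P.map W) := integral_prod _ hgi
    _ = ∫ ω, ∫ b, g (W ω) b ∂(P.map ξ) ∂P :=
        integral_map hW.aemeasurable
          (hg.stronglyMeasurable.integral_prod_right' (ν := P.map ξ)).aestronglyMeasurable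
    _ = ∫ ω, ∫ ω', g (W ω) (ξ ω') ∂P ∂P := integral_congr_ae <| ae_of_all _ fun ω =>
        integral_map hξ.aemeasurable (hg.comp measurable_prodMk_left).aestronglyMeasurable

theorem setIntegral_comp_le_of_indep {ξ : Ω → β} (hξ : Measurable ξ) {m : MeasurableSpace Ω}
    (hm : m ≤ mΩ) (hind : Indep m (mβ.comap ξ) P) {Y : Ω → α} (hY : Measurable[m] Y)
    {A : Set Ω} (hA : MeasurableSet[m] A) {h : α → β → ℝ} (hh : Measurable (Function.uncurry h))
    {C : ℝ} (hhC : ∀ a b, h a b ∈ Set.Icc 0 C) {φ : Ω → ℝ} (hφ : IntegrableOn φ A P)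
    (hle : ∀ ω ∈ A, ∫ ω', h (Y ω) (ξ ω') ∂P ≤ φ ω) :
    ∫ ω in A, h (Y ω) (ξ ω) ∂P ≤ ∫ ω in A, φ ω ∂P := by
  classical
  -- Recording membership in `A` in a second coordinate reduces this to the freezing lemma.
  set W : Ω → α × Bool := fun ω => (Y ω, decide (ω ∈ A))
  have hWm : Measurable[m] W :=
    hY.prodMk (measurable_to_bool (by simpa [Set.preimage, W] using hA))
  have hWξ : IndepFun W ξ P :=
    (IndepFun_iff_Indep _ _ _).2 (indep_of_indep_of_le_left hind hWm.comap_le)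
  have hW : Measurable[mΩ] W := hWm.mono hm le_rfl
  have hA' : MeasurableSet[mΩ] A := hm _ hA
  -- Otherwise `m` would be picked up as the measurable space instance on `Ω` from here on.
  clear hind hY hWm hA hm m
  set g : α × Bool → β → ℝ := fun p b => if p.2 then h p.1 b else 0
  have hg : Measurable (Function.uncurry g) :=
    Measurable.ite ((measurableSet_singleton true).preimage (measurable_snd.comp measurable_fst))
      (hh.comp ((measurable_fst.comp measurable_fst).prodMk measurable_snd)) measurable_const
  have hgC : ∀ p b, |g p b| ≤ C := fun p b => by
    have := hhC p.1 b
    dsimp only [g]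
    split_ifs <;> rw [abs_le] <;> constructor <;> linarith [this.1, this.2]
  calc ∫ ω in A, h (Y ω) (ξ ω) ∂P = ∫ ω, g (W ω) (ξ ω) ∂P := by
        rw [← integral_indicator hA']
        congr 1 with ω
        by_cases hω : ω ∈ A <;> simp [W, g, hω]
    _ = ∫ ω, ∫ ω', g (W ω) (ξ ω') ∂P ∂P := hWξ.integral_comp_eq_integral_integral hW hξ hg hgC
    _ ≤ ∫ ω, A.indicator φ ω ∂P := by
        refine integral_mono_of_nonneg (ae_of_all _ fun ω => integral_nonneg fun ω' => ?_)
          (hφ.integrable_indicator hA') (ae_of_all _ fun ω => ?_)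
        · by_cases hω : ω ∈ A <;> simp [W, g, hω, (hhC _ _).1]
        · by_cases hω : ω ∈ A
          · simpa [W, g, hω] using hle ω hω
          · simp [W, g, hω]
    _ = ∫ ω in A, φ ω ∂P := integral_indicator hA'

end Freezing

section PastNoise

variable {η : ℕ → Ω → β} {F : α → β → α} {x : ℕ → Ω → α} {x₀ : α}

abbrev pastNoise (η : ℕ → Ω → β) (k : ℕ) : MeasurableSpace Ω :=
  ⨆ j ∈ Set.Iio k, mβ.comap (η j)

theorem pastNoise_mono : Monotone (pastNoise η) :=
  fun _ _ hkl => biSup_mono fun _ hj => lt_of_lt_of_le hj hkl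

theorem pastNoise_le [mΩ : MeasurableSpace Ω] (hη : ∀ k, Measurable (η k)) (k : ℕ) :
    pastNoise η k ≤ mΩ :=
  iSup₂_le fun j _ => (hη j).comap_le

theorem iIndepFun.indep_pastNoise [MeasurableSpace Ω] {P : Measure Ω} (hind : iIndepFun η P)
    (hη : ∀ k, Measurable (η k)) (k : ℕ) : Indep (pastNoise η k) (mβ.comap (η k)) P := by
  have h := indep_iSup_of_disjoint (fun j => (hη j).comap_le) hind.iIndep
    (Set.disjoint_singleton_right.2 (lt_irrefl k) : Disjoint (Set.Iio k) {k})
  rwa [iSup_singleton] at h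

theorem IsNoiseDrivenChain.measurable_pastNoise (hx : IsNoiseDrivenChain x x₀ F η)
    (hF : Measurable (Function.uncurry F)) (k : ℕ) : Measurable[pastNoise η k] (x k) := by
  induction k with
  | zero => rw [funext hx.init]; exact measurable_const
  | succ k ih =>
    have hηk : Measurable[pastNoise η (k + 1)] (η k) :=
      measurable_iff_comap_le.2 <|
        le_iSup₂ (f := fun j (_ : j ∈ Set.Iio (k + 1)) => mβ.comap (η j)) k k.lt_succ_self
    rw [show x (k + 1) = fun ω => F (x k ω) (η k ω) from funext (hx.step k)]
    exact hF.comp ((ih.mono (pastNoise_mono k.le_succ) le_rfl).prodMk hηk)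

theorem IsNoiseDrivenChain.measurableSet_pastNoise_safeUpTo (hx : IsNoiseDrivenChain x x₀ F η)
    (hF : Measurable (Function.uncurry F)) {Xs : Set α} (hXs : MeasurableSet Xs) (k : ℕ) :
    MeasurableSet[pastNoise η k] (safeUpTo x Xs k) := by
  have : safeUpTo x Xs k = ⋂ j ∈ Set.Iic k, x j ⁻¹' Xs := by ext; simp [safeUpTo]
  rw [this]
  refine MeasurableSet.biInter (Set.to_countable _) fun j hj => ?_
  exact (hx.measurable_pastNoise hF j).mono (pastNoise_mono hj) le_rfl hXs

end PastNoise

section StochasticBarrier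

variable [MeasurableSpace Ω] {P : Measure Ω} [IsProbabilityMeasure P] {η : ℕ → Ω → β}
  {η₀ : Ω → β} {F : α → β → α} {x : ℕ → Ω → α} {x₀ : α} {Xs : Set α} {B : α → ℝ} {M c : ℝ}

theorem IsNoiseDrivenChain.measurableSet_safeUpTo (hx : IsNoiseDrivenChain x x₀ F η)
    (hη : ∀ k, Measurable (η k)) (hF : Measurable (Function.uncurry F))
    (hXs : MeasurableSet Xs) (k : ℕ) : MeasurableSet (safeUpTo x Xs k) :=
  pastNoise_le hη k _ (hx.measurableSet_pastNoise_safeUpTo hF hXs k)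

theorem IsNoiseDrivenChain.integrable_comp (hx : IsNoiseDrivenChain x x₀ F η)
    (hη : ∀ k, Measurable (η k)) (hF : Measurable (Function.uncurry F)) (hB : Measurable B)
    (hBM : ∀ y, B y ∈ Set.Icc 0 M) (k : ℕ) : Integrable (fun ω => B (x k ω)) P :=
  .of_mem_Icc 0 M
    (hB.comp ((hx.measurable_pastNoise hF k).mono (pastNoise_le hη k) le_rfl)).aemeasurable
    (ae_of_all _ fun _ => hBM _)

theorem IsNoiseDrivenChain.setIntegral_safeUpTo_succ_le (hx : IsNoiseDrivenChain x x₀ F η)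
    (hη : ∀ k, Measurable (η k)) (hind : iIndepFun η P) (hid : ∀ k, IdentDistrib (η k) η₀ P P)
    (hF : Measurable (Function.uncurry F)) (hXs : MeasurableSet Xs) (hB : Measurable B)
    (hBM : ∀ y, B y ∈ Set.Icc 0 M) (hstep : ∀ y ∈ Xs, ∫ ω, B (F y (η₀ ω)) ∂P ≤ B y + c)
    (k : ℕ) :
    ∫ ω in safeUpTo x Xs k, B (x (k + 1) ω) ∂P ≤ ∫ ω in safeUpTo x Xs k, (B (x k ω) + c) ∂P := by
  simp_rw [hx.step k]
  refine setIntegral_comp_le_of_indep (hη k) (pastNoise_le hη k) (hind.indep_pastNoise hη k)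
    (hx.measurable_pastNoise hF k) (hx.measurableSet_pastNoise_safeUpTo hF hXs k)
    (h := fun y e => B (F y e)) (hB.comp hF) (fun _ _ => hBM _)
    ((hx.integrable_comp hη hF hB hBM k).add (integrable_const c)).integrableOn
    fun ω hω => ?_
  calc ∫ ω', B (F (x k ω) (η k ω')) ∂P = ∫ ω', B (F (x k ω) (η₀ ω')) ∂P :=
        ((hid k).comp (hB.comp (hF.comp measurable_prodMk_left))).integral_eq
    _ ≤ B (x k ω) + c := hstep _ (hω k le_rfl)

theorem IsNoiseDrivenChain.integral_stoppedBarrier_succ_le (hx : IsNoiseDrivenChain x x₀ F η)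
    (hη : ∀ k, Measurable (η k)) (hind : iIndepFun η P) (hid : ∀ k, IdentDistrib (η k) η₀ P P)
    (hF : Measurable (Function.uncurry F)) (hXs : MeasurableSet Xs) (hB : Measurable B)
    (hBM : ∀ y, B y ∈ Set.Icc 0 M) (hBu : ∀ y ∉ Xs, 1 ≤ B y) (hc : 0 ≤ c)
    (hstep : ∀ y ∈ Xs, ∫ ω, B (F y (η₀ ω)) ∂P ≤ B y + c) (k : ℕ) :
    ∫ ω, stoppedBarrier B x Xs (k + 1) ω ∂P ≤ ∫ ω, stoppedBarrier B x Xs k ω ∂P + c := by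
  classical
  set S := safeUpTo x Xs
  have hS := hx.measurableSet_safeUpTo hη hF hXs
  have hBx := hx.integrable_comp (P := P) hη hF hB hBM
  have hexit : stoppedBarrier B x Xs (k + 1) ≤
      (S k).piecewise (fun ω => B (x (k + 1) ω)) fun _ => 1 := by
    intro ω
    by_cases hω : ω ∈ S (k + 1)
    · simp [stoppedBarrier, S, hω, (mem_safeUpTo_succ.1 hω).1]
    · by_cases hωk : ω ∈ S k
      · simpa [stoppedBarrier, S, hω, hωk] using
          hBu _ fun h => hω (mem_safeUpTo_succ.2 ⟨hωk, h⟩)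
      · simp [stoppedBarrier, S, hω, hωk]
  calc ∫ ω, stoppedBarrier B x Xs (k + 1) ω ∂P
      ≤ ∫ ω, (S k).piecewise (fun ω => B (x (k + 1) ω)) (fun _ => 1) ω ∂P :=
        integral_mono
          (Integrable.piecewise (hS (k + 1)) (hBx (k + 1)).integrableOn
            (integrable_const 1).integrableOn)
          (Integrable.piecewise (hS k) (hBx (k + 1)).integrableOn (integrable_const 1).integrableOn)
          hexit
    _ = ∫ ω in S k, B (x (k + 1) ω) ∂P + P.real (S k)ᶜ :=
        integral_piecewise_one (hS k) (hBx (k + 1)).integrableOn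
    _ ≤ ∫ ω in S k, (B (x k ω) + c) ∂P + P.real (S k)ᶜ :=
        add_le_add (hx.setIntegral_safeUpTo_succ_le hη hind hid hF hXs hB hBM hstep k) le_rfl
    _ = ∫ ω in S k, B (x k ω) ∂P + P.real (S k)ᶜ + c * P.real (S k) := by
        rw [integral_add (hBx k).integrableOn (integrable_const c).integrableOn, setIntegral_const,
          smul_eq_mul]
        ring
    _ ≤ ∫ ω, stoppedBarrier B x Xs k ω ∂P + c := by
        rw [integral_stoppedBarrier (hS k) (hBx k)]
        nlinarith [measureReal_le_one (μ := P) (s := S k)]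

theorem IsNoiseDrivenChain.one_sub_le_measureReal_safeUpTo (hx : IsNoiseDrivenChain x x₀ F η)
    (hη : ∀ k, Measurable (η k)) (hind : iIndepFun η P) (hid : ∀ k, IdentDistrib (η k) η₀ P P)
    (hF : Measurable (Function.uncurry F)) (hXs : MeasurableSet Xs) (hB : Measurable B)
    (hBM : ∀ y, B y ∈ Set.Icc 0 M) (hBu : ∀ y ∉ Xs, 1 ≤ B y) (hc : 0 ≤ c)
    (hstep : ∀ y ∈ Xs, ∫ ω, B (F y (η₀ ω)) ∂P ≤ B y + c) (hx₀ : x₀ ∈ Xs) (T : ℕ) :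
    1 - (B x₀ + c * T) ≤ P.real (safeUpTo x Xs T) := by
  have hV₀ : stoppedBarrier B x Xs 0 = fun _ => B x₀ := funext fun ω => by
    have hω : ω ∈ safeUpTo x Xs 0 := fun j hj => by rw [Nat.le_zero.1 hj, hx.init]; exact hx₀
    simp [stoppedBarrier, hω, hx.init]
  have hVT : ∫ ω, stoppedBarrier B x Xs T ω ∂P ≤ B x₀ + c * T := by
    induction T with
    | zero => simp [hV₀]
    | succ T ih =>
      have := hx.integral_stoppedBarrier_succ_le hη hind hid hF hXs hB hBM hBu hc hstep T
      push_cast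
      linarith
  have hS := hx.measurableSet_safeUpTo hη hF hXs T
  have hsafe : 0 ≤ ∫ ω in safeUpTo x Xs T, B (x T ω) ∂P :=
    setIntegral_nonneg hS fun _ _ => (hBM _).1
  rw [integral_stoppedBarrier hS (hx.integrable_comp hη hF hB hBM T),
    probReal_compl_eq_one_sub hS] at hVT
  linarith

end StochasticBarrier

end ProbabilityTheory

theorem stmt_15_general {Ω : Type*} [MeasurableSpace Ω] (P : Measure Ω) [IsProbabilityMeasure P]
    {n : ℕ} (Xs X0 : Set (Fin n → ℝ)) (hXs : MeasurableSet Xs) (hX0 : X0 ⊆ Xs)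
    (B : (Fin n → ℝ) → ℝ) (hB_meas : Measurable B)
    (M : ℝ) (hB_rng : ∀ y, B y ∈ Set.Icc (0:ℝ) M)
    (hB_unsafe : ∀ y ∉ Xs, 1 ≤ B y)
    (f : (Fin n → ℝ) → (Fin n → ℝ)) (hf_meas : Measurable f)
    (η0 : Ω → (Fin n → ℝ))
    (γ c : ℝ) (hc : 0 ≤ c)
    (hstep : ∀ y ∈ Xs, ∫ ω, B (f y + η0 ω) ∂P ≤ B y + c)
    (hB_init : ∀ y ∈ X0, B y ≤ γ)
    (η : ℕ → Ω → (Fin n → ℝ)) (hη_meas : ∀ k, Measurable (η k))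
    (hη_indep : iIndepFun η P)
    (hη_id : ∀ k, IdentDistrib (η k) η0 P P)
    (x0 : Fin n → ℝ) (hx0 : x0 ∈ X0)
    (x : ℕ → Ω → (Fin n → ℝ))
    (hx_init : ∀ ω, x 0 ω = x0)
    (hx_step : ∀ k ω, x (k + 1) ω = f (x k ω) + η k ω)
    (T : ℕ) :
    P {ω | ∀ k ≤ T, x k ω ∈ Xs} ≥ ENNReal.ofReal (1 - (γ + c * T)) := by
  have hchain : IsNoiseDrivenChain x x0 (fun y e => f y + e) η := ⟨hx_init, hx_step⟩
  have hsafe := hchain.one_sub_le_measureReal_safeUpTo hη_meas hη_indep hη_id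
    ((hf_meas.comp measurable_fst).add measurable_snd) hXs hB_meas hB_rng hB_unsafe hc hstep
    (hX0 hx0) T
  have hγ := hB_init x0 hx0
  exact ENNReal.ofReal_le_of_le_toReal <| le_trans (by linarith) hsafe

theorem stmt_15 {Ω : Type*} [MeasurableSpace Ω] (P : Measure Ω) [IsProbabilityMeasure P]
    {n : ℕ} (Xs X0 : Set (Fin n → ℝ)) (hXs : MeasurableSet Xs) (hX0 : X0 ⊆ Xs)
    (B : (Fin n → ℝ) → ℝ) (hB_meas : Measurable B)
    (M : ℝ) (hB_rng : ∀ y, B y ∈ Set.Icc (0:ℝ) M)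
    (hB_unsafe : ∀ y ∉ Xs, 1 ≤ B y)
    (f : (Fin n → ℝ) → (Fin n → ℝ)) (hf_meas : Measurable f)
    (η0 : Ω → (Fin n → ℝ)) (hη0_meas : Measurable η0)
    (γ c : ℝ) (hγ : 0 ≤ γ) (hc : 0 ≤ c)
    (hstep : ∀ y ∈ Xs, ∫ ω, B (f y + η0 ω) ∂P ≤ B y + c)
    (hB_init : ∀ y ∈ X0, B y ≤ γ)
    (η : ℕ → Ω → (Fin n → ℝ)) (hη_meas : ∀ k, Measurable (η k))
    (hη_indep : iIndepFun η P)
    (hη_id : ∀ k, IdentDistrib (η k) η0 P P)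
    (x0 : Fin n → ℝ) (hx0 : x0 ∈ X0)
    (x : ℕ → Ω → (Fin n → ℝ))
    (hx_init : ∀ ω, x 0 ω = x0)
    (hx_step : ∀ k ω, x (k + 1) ω = f (x k ω) + η k ω)
    (T : ℕ) :
    P {ω | ∀ k ≤ T, x k ω ∈ Xs} ≥ ENNReal.ofReal (1 - (γ + c * T)) :=
  stmt_15_general P Xs X0 hXs hX0 B hB_meas M hB_rng hB_unsafe f hf_meas η0 γ c hc hstep hB_init η
    hη_meas hη_indep hη_id x0 hx0 x hx_init hx_step T
end
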